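/- Let μ, λ > 0 with μλ ≤ 1, β ∈ (0,1), α > 0, and define h(u) = 4μβu² − 2(2μβ + μβ² − αβ + μ − α)u + 2μ + 2μβ² − 2α − 2αβ + λα². Then h(u) ≥ 0 for all u ∈ [−1,1] if and only if (α, β) lies in the union of the following three regions: (i) α ≤ μ(1 − β)²/(1 + β); (ii) α ≥ 2(β + 1)(1 + √(1 − μλ))/λ, or μ(β² + 6β + 1)/(β + 1) ≤ α ≤ 2(β + 1)(1 − √(1 − μλ))/λ; (iii) μ(1 − β)²/(1 + β) ≤ α ≤ R and α ≤ μ(β² + 6β + 1)/(β + 1), where R = (P₂ − √(P₂² − 4P₁P₃))/(2P₁) with P₁ = 4μλβ − β² − 1 − 2β, P₂ = 2μβ + 2μβ² − 2μβ³ − 2μ, P₃ = 4μ²β³ + 4μ²β − 6μ²β² − μ²β⁴ − μ². -/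
import Mathlib

private lemma aux_neg_le {x y : ℝ} (h : x ^ 2 ≤ y ^ 2) (hy : 0 ≤ y) : -y ≤ x := by
  nlinarith [sq_nonneg (x + y)]

private lemma aux_le {x y : ℝ} (h : x ^ 2 ≤ y ^ 2) (hy : 0 ≤ y) : x ≤ y := by
  nlinarith [sq_nonneg (x - y)]

set_option maxHeartbeats 1600000 in
/-- Characterization of the Heavy-ball frequency-domain inequality:
`h(u) ≥ 0` for all `u ∈ [−1,1]` iff `(α,β)` lies in the union of the three regions. -/
theorem hb_fdi_region_characterization
    (μ lam β α : ℝ) (hμ : 0 < μ) (hlam : 0 < lam) (hμlam : μ * lam ≤ 1)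
    (hβ : β ∈ Set.Ioo (0 : ℝ) 1) (hα : 0 < α) :
    (∀ u ∈ Set.Icc (-1 : ℝ) 1,
      4 * μ * β * u ^ 2 - 2 * (2 * μ * β + μ * β ^ 2 - α * β + μ - α) * u +
        2 * μ + 2 * μ * β ^ 2 - 2 * α - 2 * α * β + lam * α ^ 2 ≥ 0)
    ↔ (α ≤ μ * (1 - β) ^ 2 / (1 + β) ∨
       (α ≥ 2 * (β + 1) * (1 + Real.sqrt (1 - μ * lam)) / lam ∨
        (μ * (β ^ 2 + 6 * β + 1) / (β + 1) ≤ α ∧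
          α ≤ 2 * (β + 1) * (1 - Real.sqrt (1 - μ * lam)) / lam)) ∨
       (μ * (1 - β) ^ 2 / (1 + β) ≤ α ∧
        α ≤ ((2 * μ * β + 2 * μ * β ^ 2 - 2 * μ * β ^ 3 - 2 * μ) -
          Real.sqrt ((2 * μ * β + 2 * μ * β ^ 2 - 2 * μ * β ^ 3 - 2 * μ) ^ 2 -
            4 * (4 * μ * lam * β - β ^ 2 - 1 - 2 * β) *
              (4 * μ ^ 2 * β ^ 3 + 4 * μ ^ 2 * β - 6 * μ ^ 2 * β ^ 2 - μ ^ 2 * β ^ 4 - μ ^ 2))) /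
          (2 * (4 * μ * lam * β - β ^ 2 - 1 - 2 * β)) ∧
        α ≤ μ * (β ^ 2 + 6 * β + 1) / (β + 1))) := by
  obtain ⟨hβ0, hβ1⟩ := hβ
  have hc : (0:ℝ) < 1 + β := by linarith
  have hc' : (0:ℝ) < β + 1 := by linarith
  have hμβ : (0:ℝ) < 4 * μ * β := by positivity
  have h1ml : (0:ℝ) ≤ 1 - μ * lam := by linarith
  set s := Real.sqrt (1 - μ * lam) with hsdef
  have hs2 : s ^ 2 = 1 - μ * lam := Real.sq_sqrt h1ml
  have hs0 : (0:ℝ) ≤ s := Real.sqrt_nonneg _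
  have hsq1mb : (0:ℝ) < (1-β)^2 := pow_pos (by linarith) 2
  have hP1 : 4 * μ * lam * β - β ^ 2 - 1 - 2 * β < 0 := by
    linarith only [hsq1mb, mul_nonneg hβ0.le h1ml]
  have hkeyD : (1+β)^2 * ((2 * μ * β + 2 * μ * β ^ 2 - 2 * μ * β ^ 3 - 2 * μ) ^ 2 -
            4 * (4 * μ * lam * β - β ^ 2 - 1 - 2 * β) *
              (4 * μ ^ 2 * β ^ 3 + 4 * μ ^ 2 * β - 6 * μ ^ 2 * β ^ 2 - μ ^ 2 * β ^ 4 - μ ^ 2))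
      = (2*(4 * μ * lam * β - β ^ 2 - 1 - 2 * β)*μ*(1-β)^2
          - (2 * μ * β + 2 * μ * β ^ 2 - 2 * μ * β ^ 3 - 2 * μ)*(1+β))^2
        - 16*(4 * μ * lam * β - β ^ 2 - 1 - 2 * β)*μ^3*β*lam*(1-β)^4 := by ring
  have hpos : (0:ℝ) < μ^3*β*lam*(1-β)^4 :=
    mul_pos (mul_pos (mul_pos (pow_pos hμ 3) hβ0) hlam)
      (pow_pos (by linarith : (0:ℝ) < 1-β) 4)
  have hD : 0 < (2 * μ * β + 2 * μ * β ^ 2 - 2 * μ * β ^ 3 - 2 * μ) ^ 2 -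
            4 * (4 * μ * lam * β - β ^ 2 - 1 - 2 * β) *
              (4 * μ ^ 2 * β ^ 3 + 4 * μ ^ 2 * β - 6 * μ ^ 2 * β ^ 2 - μ ^ 2 * β ^ 4 - μ ^ 2) := by
    have h5 : 0 < (1+β)^2 * ((2 * μ * β + 2 * μ * β ^ 2 - 2 * μ * β ^ 3 - 2 * μ) ^ 2 -
            4 * (4 * μ * lam * β - β ^ 2 - 1 - 2 * β) *
              (4 * μ ^ 2 * β ^ 3 + 4 * μ ^ 2 * β - 6 * μ ^ 2 * β ^ 2 - μ ^ 2 * β ^ 4 - μ ^ 2)) := by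
      linarith only [hkeyD, sq_nonneg (2*(4 * μ * lam * β - β ^ 2 - 1 - 2 * β)*μ*(1-β)^2
          - (2 * μ * β + 2 * μ * β ^ 2 - 2 * μ * β ^ 3 - 2 * μ)*(1+β)),
        mul_pos (neg_pos.mpr hP1) hpos]
    nlinarith only [h5, sq_nonneg (1+β)]
  set t := Real.sqrt ((2 * μ * β + 2 * μ * β ^ 2 - 2 * μ * β ^ 3 - 2 * μ) ^ 2 -
            4 * (4 * μ * lam * β - β ^ 2 - 1 - 2 * β) *
              (4 * μ ^ 2 * β ^ 3 + 4 * μ ^ 2 * β - 6 * μ ^ 2 * β ^ 2 - μ ^ 2 * β ^ 4 - μ ^ 2))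
    with htdef
  have ht2 : t ^ 2 = (2 * μ * β + 2 * μ * β ^ 2 - 2 * μ * β ^ 3 - 2 * μ) ^ 2 -
            4 * (4 * μ * lam * β - β ^ 2 - 1 - 2 * β) *
              (4 * μ ^ 2 * β ^ 3 + 4 * μ ^ 2 * β - 6 * μ ^ 2 * β ^ 2 - μ ^ 2 * β ^ 4 - μ ^ 2) :=
    Real.sq_sqrt hD.le
  have ht0 : (0:ℝ) ≤ t := Real.sqrt_nonneg _
  have hXsq : (2*(4 * μ * lam * β - β ^ 2 - 1 - 2 * β)*μ*(1-β)^2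
          - (2 * μ * β + 2 * μ * β ^ 2 - 2 * μ * β ^ 3 - 2 * μ)*(1+β))^2 ≤ ((1+β)*t)^2 := by
    nlinarith only [hkeyD, ht2, mul_pos hc hc, mul_pos (neg_pos.mpr hP1) hpos]
  have hX := aux_le hXsq (mul_nonneg hc.le ht0)
  have hq_id : lam * (lam*α^2 - 4*(1+β)*α + 4*μ*(1+β)^2)
      = (lam*α - 2*(1+β)*(1-s)) * (lam*α - 2*(1+β)*(1+s)) := by
    linear_combination (4*(1+β)^2) * hs2
  constructor
  · intro H
    rcases le_or_gt (α*(1+β)) (μ*(1-β)^2) with h1|h1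
    · left; rw [le_div_iff₀ hc]; linarith only [h1]
    rcases le_or_gt (α*(1+β)) (μ*(β^2+6*β+1)) with h2|h2
    · -- vertex inside: region (iii)
      right; right
      have hB1 : (2*μ*β + μ*β^2 - α*β + μ - α) ≤ 4*μ*β := by linarith only [h1]
      have hB2 : -(4*μ*β) ≤ 2*μ*β + μ*β^2 - α*β + μ - α := by linarith only [h2]
      set B : ℝ := 2 * μ * β + μ * β ^ 2 - α * β + μ - α with hBdef
      have hmem : B/(4*μ*β) ∈ Set.Icc (-1:ℝ) 1 := by
        constructor
        · rw [le_div_iff₀ hμβ]; linarith only [hB2]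
        · rw [div_le_one hμβ]; linarith only [hB1]
      have hH := H _ hmem
      have hid : 4*μ*β*(4 * μ * β * (B/(4*μ*β)) ^ 2 - 2 * B * (B/(4*μ*β)) +
          2 * μ + 2 * μ * β ^ 2 - 2 * α - 2 * α * β + lam * α ^ 2)
          = (4 * μ * lam * β - β ^ 2 - 1 - 2 * β)*α^2
            - (2 * μ * β + 2 * μ * β ^ 2 - 2 * μ * β ^ 3 - 2 * μ)*α
            + (4 * μ ^ 2 * β ^ 3 + 4 * μ ^ 2 * β - 6 * μ ^ 2 * β ^ 2 - μ ^ 2 * β ^ 4 - μ ^ 2) := by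
        rw [hBdef]; field_simp; ring
      have hg : 0 ≤ (4 * μ * lam * β - β ^ 2 - 1 - 2 * β)*α^2
            - (2 * μ * β + 2 * μ * β ^ 2 - 2 * μ * β ^ 3 - 2 * μ)*α
            + (4 * μ ^ 2 * β ^ 3 + 4 * μ ^ 2 * β - 6 * μ ^ 2 * β ^ 2 - μ ^ 2 * β ^ 4 - μ ^ 2) := by
        nlinarith only [hH, hμβ, hid]
      refine ⟨?_, ?_, ?_⟩
      · rw [div_le_iff₀ hc]; linarith only [h1]
      · rw [le_div_iff_of_neg (by linarith only [hP1] :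
            2*(4 * μ * lam * β - β ^ 2 - 1 - 2 * β) < 0)]
        have hxsq : (2*(4 * μ * lam * β - β ^ 2 - 1 - 2 * β)*α
            - (2 * μ * β + 2 * μ * β ^ 2 - 2 * μ * β ^ 3 - 2 * μ))^2 ≤ t^2 := by
          nlinarith only [hg, hP1, ht2]
        have hng := aux_neg_le hxsq ht0
        linarith only [hng]
      · rw [le_div_iff₀ hc']; linarith only [h2]
    · -- vertex to the left: region (ii)
      right; left
      have hH := H (-1) (Set.mem_Icc.mpr ⟨le_rfl, by norm_num⟩)
      have hq : 0 ≤ lam*α^2 - 4*(1+β)*α + 4*μ*(1+β)^2 := by linarith only [hH]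
      have hprod : 0 ≤ (lam*α - 2*(1+β)*(1-s)) * (lam*α - 2*(1+β)*(1+s)) := by
        linarith only [hq_id, mul_nonneg hlam.le hq]
      rcases le_or_gt (2*(1+β)*(1+s)) (lam*α) with hep|hep
      · left; rw [ge_iff_le, div_le_iff₀ hlam]; linarith only [hep]
      · right
        have hem : lam*α - 2*(1+β)*(1-s) ≤ 0 := by
          by_contra hcon
          push_neg at hcon
          nlinarith only [hprod, mul_pos hcon
            (by linarith only [hep] : (0:ℝ) < 2*(1+β)*(1+s) - lam*α)]
        constructor
        · rw [div_le_iff₀ hc']; linarith only [h2]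
        · rw [le_div_iff₀ hlam]; linarith only [hem]
  · intro hR u hu
    obtain ⟨hu1, hu2⟩ := hu
    rcases hR with h1 | (h2a | h2b) | h3
    · -- region (i)
      rw [le_div_iff₀ hc] at h1
      have hfac : 0 ≤ (1-u) * (2*(2*μ*β + μ*β^2 - α*β + μ - α) - 4*μ*β*(u+1)) := by
        apply mul_nonneg (by linarith only [hu2])
        linarith only [h1, mul_nonneg (mul_pos hμ hβ0).le
          (by linarith only [hu2] : (0:ℝ) ≤ 1 - u)]
      linarith only [hfac, mul_nonneg hlam.le (sq_nonneg α)]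
    · -- region (ii), first branch
      rw [ge_iff_le, div_le_iff₀ hlam] at h2a
      have hA : μ*(β^2+6*β+1) ≤ α*(1+β) := by
        nlinarith only [h2a, hc, hlam, mul_nonneg h1ml (by positivity : (0:ℝ) ≤ β^2+6*β+1),
          mul_nonneg hs0 hc.le, sq_nonneg (1-β)]
      have hep : 0 ≤ lam*α - 2*(1+β)*(1+s) := by linarith only [h2a]
      have hem : 0 ≤ lam*α - 2*(1+β)*(1-s) := by
        linarith only [hep, mul_nonneg hs0 hc.le]
      have hq : 0 ≤ lam*α^2 - 4*(1+β)*α + 4*μ*(1+β)^2 := by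
        nlinarith only [mul_nonneg hem hep, hq_id, hlam]
      have hfac : 0 ≤ (u+1)*(4*μ*β*(u-1) - 2*(2*μ*β + μ*β^2 - α*β + μ - α)) := by
        apply mul_nonneg (by linarith only [hu1])
        linarith only [hA, mul_nonneg (mul_pos hμ hβ0).le
          (by linarith only [hu1] : (0:ℝ) ≤ u + 1)]
      linarith only [hfac, hq]
    · -- region (ii), second branch
      obtain ⟨hb1', hb2'⟩ := h2b
      rw [div_le_iff₀ hc'] at hb1'
      rw [le_div_iff₀ hlam] at hb2'
      have hA : μ*(β^2+6*β+1) ≤ α*(1+β) := by linarith only [hb1']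
      have hem : lam*α - 2*(1+β)*(1-s) ≤ 0 := by linarith only [hb2']
      have hep : lam*α - 2*(1+β)*(1+s) ≤ 0 := by
        linarith only [hem, mul_nonneg hs0 hc.le]
      have hq : 0 ≤ lam*α^2 - 4*(1+β)*α + 4*μ*(1+β)^2 := by
        nlinarith only [mul_nonneg (neg_nonneg.2 hem) (neg_nonneg.2 hep), hq_id, hlam]
      have hfac : 0 ≤ (u+1)*(4*μ*β*(u-1) - 2*(2*μ*β + μ*β^2 - α*β + μ - α)) := by
        apply mul_nonneg (by linarith only [hu1])
        linarith only [hA, mul_nonneg (mul_pos hμ hβ0).le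
          (by linarith only [hu1] : (0:ℝ) ≤ u + 1)]
      linarith only [hfac, hq]
    · -- region (iii)
      obtain ⟨h31, h32, h33⟩ := h3
      rw [div_le_iff₀ hc] at h31
      rw [le_div_iff_of_neg (by linarith only [hP1] :
          2*(4 * μ * lam * β - β ^ 2 - 1 - 2 * β) < 0)] at h32
      have hxge : -t ≤ 2*(4 * μ * lam * β - β ^ 2 - 1 - 2 * β)*α
          - (2 * μ * β + 2 * μ * β ^ 2 - 2 * μ * β ^ 3 - 2 * μ) := by linarith only [h32]
      have hxle : 2*(4 * μ * lam * β - β ^ 2 - 1 - 2 * β)*α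
          - (2 * μ * β + 2 * μ * β ^ 2 - 2 * μ * β ^ 3 - 2 * μ) ≤ t := by
        nlinarith only [hX, h31, hP1, hc]
      have hxsq : (2*(4 * μ * lam * β - β ^ 2 - 1 - 2 * β)*α
          - (2 * μ * β + 2 * μ * β ^ 2 - 2 * μ * β ^ 3 - 2 * μ))^2 ≤ t^2 := by
        nlinarith only [hxge, hxle, ht0]
      have hg : 0 ≤ (4 * μ * lam * β - β ^ 2 - 1 - 2 * β)*α^2
            - (2 * μ * β + 2 * μ * β ^ 2 - 2 * μ * β ^ 3 - 2 * μ)*α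
            + (4 * μ ^ 2 * β ^ 3 + 4 * μ ^ 2 * β - 6 * μ ^ 2 * β ^ 2 - μ ^ 2 * β ^ 4 - μ ^ 2) := by
        nlinarith only [hxsq, ht2, hP1]
      nlinarith only [hg, sq_nonneg (4*μ*β*u - (2*μ*β + μ*β^2 - α*β + μ - α)), hμβ]
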